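/- arXiv:2511.03145 — 2 statements merged into one kernel-verified Lean document; each statement's English description precedes it below -/
import Mathlib

section
/- The MPW solution is the unique solution for TUX games satisfying efficiency (∑_{i∈N} φ_i(w) = w(N,∅) for all w on N) and balanced contributions (φ_i(w) − φ_i(w_{−j}) = φ_j(w) − φ_j(w_{−i}) for all w on N and i,j ∈ N), where restrictions are taken with the operator r*. -/
open Finset BigOperators

namespace TUX

/-- A (raw) game in partition function form: assigns a real worth to each
coalition together with a partition (of the outside players). -/
abbrev Game := Finset ℕ → Finset (Finset ℕ) → ℝ

/-- A TU game (characteristic function). -/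
abbrev TUGame := Finset ℕ → ℝ

/-- A solution for TUX games: given a player set and a game, assigns payoffs. -/
abbrev Sol := Finset ℕ → Game → ℕ → ℝ

/-- `w` is a genuine TUX game: the empty coalition has worth 0. -/
def IsTUX (w : Game) : Prop := ∀ π, w ∅ π = 0

/-- `π` is a partition of the finite set `M`. -/
def IsPartition (M : Finset ℕ) (π : Finset (Finset ℕ)) : Prop :=
  (∀ B ∈ π, B ⊆ M) ∧ ∅ ∉ π ∧ ∀ x ∈ M, (π.filter (fun B => x ∈ B)).card = 1

instance (M : Finset ℕ) : DecidablePred (IsPartition M) := fun π => by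
  unfold IsPartition; infer_instance

/-- The finite set of all partitions of `M`. -/
def partitionsOf (M : Finset ℕ) : Finset (Finset (Finset ℕ)) :=
  (M.powerset.powerset).filter (IsPartition M)

/-- The Ewens(θ = 1) probability of the partition `π` of `M`:
`p*_M(π) = ∏_{B ∈ π} (|B| - 1)! / |M|!`. -/
noncomputable def pstar (M : Finset ℕ) (π : Finset (Finset ℕ)) : ℝ :=
  (∏ B ∈ π, ((B.card - 1).factorial : ℝ)) / (M.card.factorial : ℝ)

/-- The block of `π` containing `j` (junk if `π` is not a partition containing `j`). -/
def blockOf (π : Finset (Finset ℕ)) (j : ℕ) : Finset ℕ :=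
  (π.filter (fun B => j ∈ B)).sup id

/-- Add player `i` to the block `B` of `π`. -/
def addToBlock (π : Finset (Finset ℕ)) (i : ℕ) (B : Finset ℕ) : Finset (Finset ℕ) :=
  insert (insert i B) (π.erase B)

/-- The restriction operator `r⋆` removing a single player `i` from a game on `N`:
`w₋ᵢ(S,π) = (1/(n-s)) (w(S, π₊ᵢ⇝∅) + ∑_{j ∈ N∖(S∪{i})} w(S, π₊ᵢ⇝π(j)))`. -/
noncomputable def restrict1 (N : Finset ℕ) (w : Game) (i : ℕ) : Game :=
  fun S π =>
    ((N.card : ℝ) - (S.card : ℝ))⁻¹ *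
      (w S (insert {i} π) + ∑ j ∈ (N \ S).erase i, w S (addToBlock π i (blockOf π j)))

/-- Iterated removal of a list of players. -/
noncomputable def restrictL : Finset ℕ → Game → List ℕ → Game
  | _, w, [] => w
  | N, w, i :: l => restrictL (N.erase i) (restrict1 N w i) l

/-- Removal of a set of players (via the increasing enumeration; by path
independence of `r⋆` the order is immaterial). -/
noncomputable def restrictSet (N : Finset ℕ) (w : Game) (T : Finset ℕ) : Game :=
  restrictL N w (T.sort (· ≤ ·))

/-- The average TU game `v̄_w` of a TUX game `w` on `N`. -/
noncomputable def avg (N : Finset ℕ) (w : Game) : TUGame :=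
  fun S => ∑ π ∈ partitionsOf (N \ S), pstar (N \ S) π * w S π

/-- The auxiliary TU game `v*_w(S) = w₋(N∖S)(S,∅)`. -/
noncomputable def auxGame (N : Finset ℕ) (w : Game) : TUGame :=
  fun S => restrictSet N w (N \ S) S ∅

/-- The Shapley value of a TU game on player set `N`. -/
noncomputable def shapley (N : Finset ℕ) (v : TUGame) (i : ℕ) : ℝ :=
  ∑ S ∈ (N.erase i).powerset,
    (((S.card.factorial : ℝ) * ((N.card - S.card - 1).factorial : ℝ)) / (N.card.factorial : ℝ)) *
      (v (insert i S) - v S)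

/-- The MPW solution: the Shapley value of the average game. -/
noncomputable def MPW (N : Finset ℕ) (w : Game) (i : ℕ) : ℝ := shapley N (avg N w) i

/-- The MPW solution as a solution for TUX games. -/
noncomputable def MPWsol : Sol := fun N w i => MPW N w i

/-- The scaled Dirac TUX game `δ_{T,τ}` on `N`. -/
noncomputable def scaledDirac (N T : Finset ℕ) (τ : Finset (Finset ℕ)) : Game :=
  fun S π => if S = T ∧ π = τ then (pstar (N \ T) τ)⁻¹ else 0

/-- `τ₋S`: remove the players of `S` from each block of `τ`, discarding empty blocks. -/
def partRemove (τ : Finset (Finset ℕ)) (S : Finset ℕ) : Finset (Finset ℕ) :=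
  (τ.image (fun B => B \ S)).erase ∅

/-- The Sobolev-reduced TUX game `w₋ⱼ^{So,φ}` on `N ∖ {j}`. -/
noncomputable def sobRed (N : Finset ℕ) (φ : Sol) (w : Game) (j : ℕ) : Game :=
  fun S π =>
    ((S.card : ℝ) / ((N.card : ℝ) - 1)) * (w (insert j S) π - φ N w j) +
      (1 - (S.card : ℝ) / ((N.card : ℝ) - 1)) * restrict1 N w j S π

/-- The Hart–Mas-Colell reduced TUX game `w₋T^{HM,φ}` on `N ∖ T`. -/
noncomputable def hmRed (N : Finset ℕ) (φ : Sol) (w : Game) (T : Finset ℕ) : Game :=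
  fun S π => w (S ∪ T) π - ∑ j ∈ T, φ (S ∪ T) (restrictSet N w (N \ (S ∪ T))) j

/-- Efficiency for TUX games. -/
def EfficientX (φ : Sol) : Prop :=
  ∀ (N : Finset ℕ) (w : Game), IsTUX w → ∑ i ∈ N, φ N w i = w N ∅

/-- Balanced contributions for TUX games (w.r.t. the restriction operator `r⋆`). -/
def BalancedContributionsX (φ : Sol) : Prop :=
  ∀ (N : Finset ℕ) (w : Game), IsTUX w → ∀ i ∈ N, ∀ j ∈ N,
    φ N w i - φ (N.erase j) (restrict1 N w j) i
      = φ N w j - φ (N.erase i) (restrict1 N w i) j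

/-- 2-standardness for TUX games. -/
def TwoStandardX (φ : Sol) : Prop :=
  ∀ i j : ℕ, i ≠ j → ∀ w : Game, IsTUX w →
    φ {i, j} w i
      = w {i} {({j} : Finset ℕ)}
        + (w {i, j} ∅ - w {j} {({i} : Finset ℕ)} - w {i} {({j} : Finset ℕ)}) / 2

/-- Sobolev consistency for TUX games. -/
def SobolevConsistentX (φ : Sol) : Prop :=
  ∀ (N : Finset ℕ) (w : Game), IsTUX w → ∀ i ∈ N, ∀ j ∈ N, i ≠ j →
    φ N w i = φ (N.erase j) (sobRed N φ w j) i

/-- Hart–Mas-Colell consistency (single-player removal) for TUX games. -/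
def HMConsistentX (φ : Sol) : Prop :=
  ∀ (N : Finset ℕ) (w : Game), IsTUX w → ∀ i ∈ N, ∀ j ∈ N, i ≠ j →
    φ N w i = φ (N.erase j) (hmRed N φ w {j}) i

/-- Set Hart–Mas-Colell consistency (removal of a coalition) for TUX games. -/
def SetHMConsistentX (φ : Sol) : Prop :=
  ∀ (N : Finset ℕ) (w : Game), IsTUX w → ∀ i ∈ N, ∀ T ⊆ N.erase i,
    φ N w i = φ (N \ T) (hmRed N φ w T) i

/-- The finite set of embedded coalitions `(T,τ)` of `N` with `T ≠ ∅`. -/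
def embeddedNE (N : Finset ℕ) : Finset (Finset ℕ × Finset (Finset ℕ)) :=
  (N.powerset ×ˢ N.powerset.powerset).filter
    (fun p => p.1.Nonempty ∧ IsPartition (N \ p.1) p.2)

end TUX

/-!
The Ewens weights `pstar` satisfy the Chinese-restaurant recursion: a random partition of
`M ∪ {i}` arises from one of `M` by seating `i` alone with probability `1/(|M|+1)` or next to a
uniformly chosen player of `M`. This is exactly the averaging performed by `r⋆`, so the average
game commutes with restriction: `v̄_{w₋ⱼ} = v̄_w` on coalitions of `N ∖ {j}`. The Shapley value
is the marginal Hart–Mas-Colell potential, `Sh_i(v) = P(N, v) - P(N ∖ {i}, v)`, hence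
`MPW_i(w) = P(N, v̄_w) - P(N ∖ {i}, v̄_w)`, which is efficient and makes both sides of balanced
contributions equal to `P(N) - P(N∖i) - P(N∖j) + P(N∖{i,j})`. Uniqueness goes by induction on
`|N|`: balanced contributions and the induction hypothesis make `φ_i(w) - ψ_i(w)` independent
of `i`, and efficiency forces its sum over `N` to vanish.
-/

namespace TUX

section Partition

variable {M : Finset ℕ} {π : Finset (Finset ℕ)} {B : Finset ℕ} {i : ℕ}

lemma mem_partitionsOf : π ∈ partitionsOf M ↔ IsPartition M π := by
  simp only [partitionsOf, mem_filter, mem_powerset, and_iff_right_iff_imp]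
  exact fun h B hB => mem_powerset.2 (h.1 B hB)

namespace IsPartition

lemma eq_of_mem_of_mem (hπ : IsPartition M π) {B' : Finset ℕ} (hB : B ∈ π) (hB' : B' ∈ π)
    {x : ℕ} (hx : x ∈ B) (hx' : x ∈ B') : B = B' := by
  obtain ⟨C, hC⟩ := card_eq_one.1 (hπ.2.2 x (hπ.1 B hB hx))
  have h : B ∈ π.filter (x ∈ ·) := mem_filter.2 ⟨hB, hx⟩
  have h' : B' ∈ π.filter (x ∈ ·) := mem_filter.2 ⟨hB', hx'⟩
  rw [hC, mem_singleton] at h h'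
  rw [h, h']

lemma filter_mem_eq_singleton (hπ : IsPartition M π) (hB : B ∈ π) {x : ℕ} (hx : x ∈ B) :
    π.filter (x ∈ ·) = {B} :=
  eq_singleton_iff_unique_mem.2 ⟨mem_filter.2 ⟨hB, hx⟩, fun _ hC =>
    hπ.eq_of_mem_of_mem (mem_filter.1 hC).1 hB (mem_filter.1 hC).2 hx⟩

lemma blockOf_eq (hπ : IsPartition M π) (hB : B ∈ π) {x : ℕ} (hx : x ∈ B) :
    blockOf π x = B := by
  simp [blockOf, hπ.filter_mem_eq_singleton hB hx]

lemma exists_mem_block (hπ : IsPartition M π) {x : ℕ} (hx : x ∈ M) : ∃ B ∈ π, x ∈ B := by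
  obtain ⟨C, hC⟩ := card_pos.1 (hπ.2.2 x hx ▸ one_pos)
  exact ⟨C, mem_filter.1 hC⟩

lemma blockOf_mem (hπ : IsPartition M π) {x : ℕ} (hx : x ∈ M) : blockOf π x ∈ π := by
  obtain ⟨C, hC, hxC⟩ := hπ.exists_mem_block hx
  rwa [hπ.blockOf_eq hC hxC]

lemma mem_blockOf (hπ : IsPartition M π) {x : ℕ} (hx : x ∈ M) : x ∈ blockOf π x := by
  obtain ⟨C, hC, hxC⟩ := hπ.exists_mem_block hx
  rwa [hπ.blockOf_eq hC hxC]

lemma sum_blockOf (hπ : IsPartition M π) (f : Finset ℕ → ℝ) :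
    ∑ j ∈ M, f (blockOf π j) = ∑ B ∈ π, (B.card : ℝ) * f B := by
  rw [← sum_fiberwise_of_maps_to fun j hj => hπ.blockOf_mem hj]
  refine sum_congr rfl fun B hB => ?_
  have hfiber : {j ∈ M | blockOf π j = B} = B := by
    ext j
    simp only [mem_filter]
    exact ⟨fun ⟨hj, h⟩ => h ▸ hπ.mem_blockOf hj,
      fun hj => ⟨hπ.1 B hB hj, hπ.blockOf_eq hB hj⟩⟩
  rw [sum_congr rfl fun j hj => by rw [(mem_filter.1 hj).2], sum_const, hfiber, nsmul_eq_mul]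

lemma nonempty_of_mem (hπ : IsPartition M π) (hB : B ∈ π) : B.Nonempty :=
  nonempty_iff_ne_empty.2 fun h => hπ.2.1 (h ▸ hB)

lemma notMem_of_notMem (hπ : IsPartition M π) (hi : i ∉ M) (hB : B ∈ π) : i ∉ B :=
  fun h => hi (hπ.1 B hB h)

lemma singleton_notMem (hπ : IsPartition M π) (hi : i ∉ M) : ({i} : Finset ℕ) ∉ π :=
  fun h => hπ.notMem_of_notMem hi h (mem_singleton_self i)

end IsPartition

lemma isPartition_addToBlock (hπ : IsPartition M π) (hi : i ∉ M) (hB : B ∈ insert ∅ π) :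
    IsPartition (insert i M) (addToBlock π i B) := by
  have hBM : B ⊆ M := by
    rcases mem_insert.1 hB with rfl | hB
    · exact empty_subset M
    · exact hπ.1 B hB
  refine ⟨fun C hC => ?_, fun h => ?_, fun x hx => ?_⟩
  · rcases mem_insert.1 hC with rfl | hC
    · exact insert_subset_insert i hBM
    · exact (hπ.1 C (mem_of_mem_erase hC)).trans (subset_insert i M)
  · rcases mem_insert.1 h with h | h
    · exact insert_ne_empty i B h.symm
    · exact hπ.2.1 (mem_of_mem_erase h)
  · rw [addToBlock, filter_insert, filter_erase]
    rcases mem_insert.1 hx with rfl | hxM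
    · rw [if_pos (mem_insert_self x B),
        filter_eq_empty_iff.2 fun C hC => hπ.notMem_of_notMem hi hC]
      simp
    · have hxi : x ≠ i := fun h => hi (h ▸ hxM)
      by_cases hxB : x ∈ B
      · have hBπ : B ∈ π := (mem_insert.1 hB).resolve_left (ne_empty_of_mem hxB)
        rw [if_pos (mem_insert_of_mem hxB), hπ.filter_mem_eq_singleton hBπ hxB]
        simp
      · rw [if_neg (by simp [hxi, hxB]), erase_eq_of_notMem (by simp [hxB]), hπ.2.2 x hxM]

lemma addToBlock_empty (hπ : ∅ ∉ π) : addToBlock π i ∅ = insert {i} π := by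
  simp [addToBlock, erase_eq_of_notMem hπ]

lemma isPartition_insert_singleton (hπ : IsPartition M π) (hi : i ∉ M) :
    IsPartition (insert i M) (insert {i} π) :=
  addToBlock_empty (i := i) hπ.2.1 ▸ isPartition_addToBlock hπ hi (mem_insert_self ∅ π)

lemma insert_notMem_erase_of_isPartition (hπ : IsPartition M π) (hi : i ∉ M) :
    insert i B ∉ π.erase B :=
  fun h => hπ.notMem_of_notMem hi (mem_of_mem_erase h) (mem_insert_self i B)

lemma singleton_notMem_addToBlock (hπ : IsPartition M π) (hi : i ∉ M) (hB : B ∈ π) :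
    ({i} : Finset ℕ) ∉ addToBlock π i B := by
  intro h
  rcases mem_insert.1 h with h | h
  · obtain ⟨x, hx⟩ := hπ.nonempty_of_mem hB
    have hxi : x ∈ ({i} : Finset ℕ) := h ▸ mem_insert_of_mem hx
    exact hπ.notMem_of_notMem hi hB (mem_singleton.1 hxi ▸ hx)
  · exact hπ.singleton_notMem hi (mem_of_mem_erase h)

lemma blockOf_addToBlock (hπ : IsPartition M π) (hi : i ∉ M) (hB : B ∈ π) :
    blockOf (addToBlock π i B) i = insert i B :=
  (isPartition_addToBlock hπ hi (mem_insert_of_mem hB)).blockOf_eq (mem_insert_self _ _)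
    (mem_insert_self i B)

def eraseFromBlock (σ : Finset (Finset ℕ)) (i : ℕ) : Finset (Finset ℕ) :=
  insert ((blockOf σ i).erase i) (σ.erase (blockOf σ i))

lemma eraseFromBlock_addToBlock (hπ : IsPartition M π) (hi : i ∉ M) (hB : B ∈ π) :
    eraseFromBlock (addToBlock π i B) i = π := by
  rw [eraseFromBlock, blockOf_addToBlock hπ hi hB, addToBlock,
    erase_insert (insert_notMem_erase_of_isPartition hπ hi),
    erase_insert (hπ.notMem_of_notMem hi hB), insert_erase hB]

variable {σ : Finset (Finset ℕ)}

lemma isPartition_erase_singleton (hσ : IsPartition (insert i M) σ) (hi : i ∉ M)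
    (hiσ : ({i} : Finset ℕ) ∈ σ) : IsPartition M (σ.erase {i}) := by
  have hblk : ∀ B ∈ σ.erase {i}, i ∉ B := fun B hB hiB => ne_of_mem_erase hB
    (hσ.eq_of_mem_of_mem (mem_of_mem_erase hB) hiσ hiB (mem_singleton_self i))
  refine ⟨fun B hB x hx => ?_, fun h => hσ.2.1 (mem_of_mem_erase h), fun x hx => ?_⟩
  · rcases mem_insert.1 (hσ.1 B (mem_of_mem_erase hB) hx) with rfl | h
    · exact absurd hx (hblk B hB)
    · exact h
  · have hxi : x ≠ i := fun h => hi (h ▸ hx)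
    rw [filter_erase, erase_eq_of_notMem (by simp [hxi]), hσ.2.2 x (mem_insert_of_mem hx)]

lemma erase_blockOf_notMem (hσ : IsPartition M σ) (hi : i ∈ M) : (blockOf σ i).erase i ∉ σ := by
  intro h
  obtain ⟨x, hx⟩ := hσ.nonempty_of_mem h
  have hblock := hσ.eq_of_mem_of_mem h (hσ.blockOf_mem hi) hx (mem_of_mem_erase hx)
  exact notMem_erase i _ (hblock ▸ hσ.mem_blockOf hi)

lemma addToBlock_eraseFromBlock (hσ : IsPartition M σ) (hi : i ∈ M) :
    addToBlock (eraseFromBlock σ i) i ((blockOf σ i).erase i) = σ := by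
  rw [addToBlock, eraseFromBlock,
    erase_insert fun h => erase_blockOf_notMem hσ hi (mem_of_mem_erase h),
    insert_erase (hσ.mem_blockOf hi), insert_erase (hσ.blockOf_mem hi)]

lemma isPartition_eraseFromBlock (hσ : IsPartition (insert i M) σ) (hi : i ∉ M)
    (hiσ : ({i} : Finset ℕ) ∉ σ) : IsPartition M (eraseFromBlock σ i) := by
  set C := blockOf σ i with hCdef
  have hC : C ∈ σ := hσ.blockOf_mem (mem_insert_self i M)
  have hiC : i ∈ C := hσ.mem_blockOf (mem_insert_self i M)
  have hblk : ∀ B ∈ σ.erase C, i ∉ B := fun B hB hiB =>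
    ne_of_mem_erase hB (hσ.eq_of_mem_of_mem (mem_of_mem_erase hB) hC hiB hiC)
  refine ⟨fun B hB x hx => ?_, fun h => ?_, fun x hx => ?_⟩
  · rcases mem_insert.1 hB with rfl | hB
    · rcases mem_insert.1 (hσ.1 C hC (mem_of_mem_erase hx)) with rfl | h
      · exact absurd hx (notMem_erase x C)
      · exact h
    · rcases mem_insert.1 (hσ.1 B (mem_of_mem_erase hB) hx) with rfl | h
      · exact absurd hx (hblk B hB)
      · exact h
  · rcases mem_insert.1 h with h | h
    · rcases (erase_eq_empty_iff C i).1 h.symm with h | h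
      · exact hσ.2.1 (h ▸ hC)
      · exact hiσ (h ▸ hC)
    · exact hσ.2.1 (mem_of_mem_erase h)
  · have hxi : x ≠ i := fun h => hi (h ▸ hx)
    rw [eraseFromBlock, ← hCdef, filter_insert, filter_erase]
    by_cases hxC : x ∈ C
    · rw [if_pos (mem_erase.2 ⟨hxi, hxC⟩), hσ.filter_mem_eq_singleton hC hxC]
      simp
    · rw [if_neg fun h => hxC (mem_of_mem_erase h), erase_eq_of_notMem (by simp [hxC]),
        hσ.2.2 x (mem_insert_of_mem hx)]

lemma sum_partitionsOf_insert_of_singleton_mem (hi : i ∉ M) (g : Finset (Finset ℕ) → ℝ) :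
    ∑ σ ∈ partitionsOf (insert i M) with {i} ∈ σ, g σ = ∑ π ∈ partitionsOf M, g (insert {i} π) := by
  refine sum_nbij' (fun σ => σ.erase {i}) (fun π => insert {i} π) ?_ ?_ ?_ ?_ ?_
  · intro σ hσ
    rw [mem_filter, mem_partitionsOf] at hσ
    exact mem_partitionsOf.2 (isPartition_erase_singleton hσ.1 hi hσ.2)
  · intro π hπ
    rw [mem_partitionsOf] at hπ
    exact mem_filter.2
      ⟨mem_partitionsOf.2 (isPartition_insert_singleton hπ hi), mem_insert_self _ _⟩
  · exact fun σ hσ => insert_erase (mem_filter.1 hσ).2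
  · exact fun π hπ => erase_insert ((mem_partitionsOf.1 hπ).singleton_notMem hi)
  · exact fun σ hσ => by rw [insert_erase (mem_filter.1 hσ).2]

lemma sum_partitionsOf_insert_of_singleton_notMem (hi : i ∉ M) (g : Finset (Finset ℕ) → ℝ) :
    ∑ σ ∈ partitionsOf (insert i M) with {i} ∉ σ, g σ
      = ∑ p ∈ (partitionsOf M).sigma id, g (addToBlock p.1 i p.2) := by
  refine sum_nbij' (fun σ => (⟨eraseFromBlock σ i, (blockOf σ i).erase i⟩ :
      Σ _ : Finset (Finset ℕ), Finset ℕ)) (fun p => addToBlock p.1 i p.2) ?_ ?_ ?_ ?_ ?_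
  · intro σ hσ
    rw [mem_filter, mem_partitionsOf] at hσ
    exact mem_sigma.2
      ⟨mem_partitionsOf.2 (isPartition_eraseFromBlock hσ.1 hi hσ.2), mem_insert_self _ _⟩
  · intro p hp
    rw [mem_sigma, mem_partitionsOf] at hp
    exact mem_filter.2
      ⟨mem_partitionsOf.2 (isPartition_addToBlock hp.1 hi (mem_insert_of_mem hp.2)),
        singleton_notMem_addToBlock hp.1 hi hp.2⟩
  · exact fun σ hσ =>
      addToBlock_eraseFromBlock (mem_partitionsOf.1 (mem_filter.1 hσ).1) (mem_insert_self i M)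
  · intro p hp
    rw [mem_sigma, mem_partitionsOf] at hp
    refine Sigma.ext (eraseFromBlock_addToBlock hp.1 hi hp.2) (heq_of_eq ?_)
    rw [blockOf_addToBlock hp.1 hi hp.2, erase_insert (hp.1.notMem_of_notMem hi hp.2)]
  · intro σ hσ
    rw [addToBlock_eraseFromBlock (mem_partitionsOf.1 (mem_filter.1 hσ).1) (mem_insert_self i M)]

end Partition

section Ewens

open scoped Nat

variable {M : Finset ℕ} {π : Finset (Finset ℕ)} {i : ℕ}

lemma pstar_insert_singleton (hπ : IsPartition M π) (hi : i ∉ M) :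
    pstar (insert i M) (insert {i} π) = pstar M π / ((M.card : ℝ) + 1) := by
  rw [pstar, pstar, prod_insert (hπ.singleton_notMem hi), card_insert_of_notMem hi,
    Nat.factorial_succ]
  push_cast
  simp only [card_singleton, Nat.sub_self, Nat.factorial_zero, Nat.cast_one, one_mul]
  rw [div_div, mul_comm ((M.card : ℝ) + 1)]

lemma pstar_addToBlock (hπ : IsPartition M π) (hi : i ∉ M) {B : Finset ℕ} (hB : B ∈ π) :
    pstar (insert i M) (addToBlock π i B) = (B.card : ℝ) * pstar M π / ((M.card : ℝ) + 1) := by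
  have hfac : ((insert i B).card - 1)! = B.card * (B.card - 1)! := by
    rw [card_insert_of_notMem (hπ.notMem_of_notMem hi hB), Nat.add_sub_cancel,
      Nat.mul_factorial_pred (hπ.nonempty_of_mem hB).card_pos.ne']
  rw [pstar, pstar, addToBlock, prod_insert (insert_notMem_erase_of_isPartition hπ hi), hfac,
    ← mul_prod_erase π _ hB, card_insert_of_notMem hi, Nat.factorial_succ]
  push_cast
  field_simp

/-- The Chinese-restaurant recursion of the Ewens weights. -/
lemma sum_partitionsOf_insert_pstar_mul (hi : i ∉ M) (f : Finset (Finset ℕ) → ℝ) :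
    ∑ σ ∈ partitionsOf (insert i M), pstar (insert i M) σ * f σ
      = ((M.card : ℝ) + 1)⁻¹ * ∑ π ∈ partitionsOf M, pstar M π *
          (f (insert {i} π) + ∑ j ∈ M, f (addToBlock π i (blockOf π j))) := by
  rw [← sum_filter_add_sum_filter_not _ fun σ => {i} ∈ σ,
    sum_partitionsOf_insert_of_singleton_mem hi, sum_partitionsOf_insert_of_singleton_notMem hi,
    sum_sigma, ← sum_add_distrib, mul_sum]
  refine sum_congr rfl fun π hπm => ?_
  have hπ := mem_partitionsOf.1 hπm
  rw [hπ.sum_blockOf fun B => f (addToBlock π i B), pstar_insert_singleton hπ hi,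
    sum_congr rfl fun B hB => by rw [pstar_addToBlock hπ hi hB]]
  simp only [id, mul_add, mul_sum]
  congr 1
  · ring
  · exact sum_congr rfl fun B _ => by ring

lemma avg_restrict1 {N : Finset ℕ} (w : Game) {j : ℕ} (hj : j ∈ N) {S : Finset ℕ}
    (hS : S ⊆ N.erase j) : avg (N.erase j) (restrict1 N w j) S = avg N w S := by
  set M := N.erase j \ S
  have hjM : j ∉ M := by simp [M]
  have hM : (N \ S).erase j = M := by
    ext x
    simp only [M, mem_sdiff, mem_erase]
    tauto
  have hjNS : j ∈ N \ S := mem_sdiff.2 ⟨hj, fun h => (mem_erase.1 (hS h)).1 rfl⟩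
  have hins : insert j M = N \ S := by rw [← hM, insert_erase hjNS]
  have hcard : (N.card : ℝ) - S.card = M.card + 1 := by
    have hSN : S ⊆ N := hS.trans (erase_subset j N)
    rw [← Nat.cast_sub (card_le_card hSN), ← card_sdiff_of_subset hSN, ← hins,
      card_insert_of_notMem hjM]
    push_cast
    ring
  have hterm : ∀ π, pstar M π * restrict1 N w j S π = ((M.card : ℝ) + 1)⁻¹ * (pstar M π *
      (w S (insert {j} π) + ∑ k ∈ M, w S (addToBlock π j (blockOf π k)))) := fun π => by
    rw [restrict1, hcard, hM]
    ring
  rw [avg, sum_congr rfl fun π _ => hterm π, ← mul_sum, ← sum_partitionsOf_insert_pstar_mul hjM,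
    hins, avg]

end Ewens

section Potential

open scoped Nat

noncomputable def potCoeff (n s : ℕ) : ℝ := ((s - 1)! * (n - s)! : ℝ) / n !

/-- The Hart–Mas-Colell potential of a TU game. The weight `potCoeff n 0` is junk
(`(0 - 1)! = 1`); it never matters because all games here vanish at `∅`. -/
noncomputable def pot (N : Finset ℕ) (v : TUGame) : ℝ :=
  ∑ S ∈ N.powerset, potCoeff N.card S.card * v S

lemma potCoeff_add_one (n s : ℕ) : potCoeff n (s + 1) = (s ! * (n - s - 1)! : ℝ) / n ! := by
  rw [potCoeff, Nat.add_sub_cancel, Nat.sub_sub]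

lemma potCoeff_add_one_sub {e s : ℕ} (hs : 1 ≤ s) (hse : s ≤ e) :
    potCoeff (e + 1) s - potCoeff e s = -((s ! * (e + 1 - s - 1)! : ℝ) / (e + 1)!) := by
  obtain ⟨t, rfl⟩ := Nat.exists_eq_add_of_le' hs
  obtain ⟨d, rfl⟩ := Nat.exists_eq_add_of_le hse
  rw [potCoeff, potCoeff, show t + 1 + d + 1 - (t + 1) = d + 1 by omega,
    show t + 1 + d - (t + 1) = d by omega]
  simp only [Nat.add_sub_cancel]
  rw [Nat.factorial_succ d, Nat.factorial_succ (t + 1 + d), Nat.factorial_succ t]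
  push_cast
  field_simp
  ring

lemma mul_potCoeff_add_one {m s : ℕ} (hs : s ≤ m) :
    (m + 1) * potCoeff (m + 1) s = ((m + 1 - s : ℕ) : ℝ) * potCoeff m s := by
  obtain ⟨d, rfl⟩ := Nat.exists_eq_add_of_le hs
  rw [potCoeff, potCoeff, show s + d + 1 - s = d + 1 by omega, show s + d - s = d by omega,
    Nat.factorial_succ d, Nat.factorial_succ (s + d)]
  push_cast
  field_simp

lemma shapley_insert_eq_pot_sub {E : Finset ℕ} {v : TUGame} (hv : v ∅ = 0) {i : ℕ}
    (hi : i ∉ E) : shapley (insert i E) v i = pot (insert i E) v - pot E v := by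
  rw [shapley, pot, pot, erase_insert hi, sum_powerset_insert hi, card_insert_of_notMem hi,
    add_sub_right_comm, ← sum_sub_distrib, ← sum_add_distrib]
  refine sum_congr rfl fun S hS => ?_
  have hSE : S ⊆ E := mem_powerset.1 hS
  rw [card_insert_of_notMem fun h => hi (hSE h), potCoeff_add_one, ← sub_mul]
  rcases S.eq_empty_or_nonempty with rfl | hSne
  · simp [hv]
  · rw [potCoeff_add_one_sub hSne.card_pos (card_le_card hSE)]
    ring

lemma shapley_eq_pot_sub {N : Finset ℕ} {v : TUGame} (hv : v ∅ = 0) {i : ℕ} (hi : i ∈ N) :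
    shapley N v i = pot N v - pot (N.erase i) v := by
  simpa only [insert_erase hi] using shapley_insert_eq_pot_sub hv (notMem_erase i N)

lemma sum_pot_erase (N : Finset ℕ) (v : TUGame) :
    ∑ i ∈ N, pot (N.erase i) v
      = ∑ S ∈ N.powerset, ((N.card - S.card : ℕ) : ℝ) * potCoeff (N.card - 1) S.card * v S := by
  have hcomm : ∑ i ∈ N, ∑ S ∈ (N.erase i).powerset, potCoeff (N.card - 1) S.card * v S
      = ∑ S ∈ N.powerset, ∑ _i ∈ N \ S, potCoeff (N.card - 1) S.card * v S :=
    sum_comm' fun i S => by simp only [mem_powerset, subset_erase, mem_sdiff]; tauto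
  rw [← sum_congr rfl fun i hi => by rw [pot, card_erase_of_mem hi], hcomm]
  refine sum_congr rfl fun S hS => ?_
  rw [sum_const, card_sdiff_of_subset (mem_powerset.1 hS), nsmul_eq_mul, mul_assoc]

lemma sum_shapley {N : Finset ℕ} {v : TUGame} (hv : v ∅ = 0) : ∑ i ∈ N, shapley N v i = v N := by
  rcases N.eq_empty_or_nonempty with rfl | hN
  · simp [hv]
  obtain ⟨m, hm⟩ : ∃ m, N.card = m + 1 := Nat.exists_eq_add_one_of_ne_zero hN.card_pos.ne'
  rw [sum_congr rfl fun i hi => shapley_eq_pot_sub hv hi, sum_sub_distrib, sum_const,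
    nsmul_eq_mul, sum_pot_erase, pot, mul_sum, ← sum_sub_distrib,
    sum_eq_single_of_mem N (mem_powerset_self N)]
  · rw [hm, Nat.sub_self, potCoeff, Nat.sub_self, Nat.add_sub_cancel, Nat.factorial_succ]
    push_cast
    field_simp
    ring
  · intro S hS hSN
    have hs : S.card ≤ m := by
      have := card_lt_card (ssubset_of_subset_of_ne (mem_powerset.1 hS) hSN)
      omega
    rw [hm, Nat.add_sub_cancel, Nat.cast_add_one, ← mul_assoc, mul_potCoeff_add_one hs, sub_self]

end Potential

section MPW

variable {N : Finset ℕ} {w : Game}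

lemma IsTUX.restrict1 (hw : IsTUX w) (i : ℕ) : IsTUX (restrict1 N w i) := fun π => by
  simp [TUX.restrict1, hw _]

lemma avg_empty (hw : IsTUX w) : avg N w ∅ = 0 := by
  simp [avg, hw _]

lemma partitionsOf_empty : partitionsOf ∅ = {∅} := by
  ext σ
  rw [mem_partitionsOf, mem_singleton]
  refine ⟨fun h => eq_empty_of_forall_notMem fun B hB => ?_, fun h => ?_⟩
  · exact h.2.1 (subset_empty.1 (h.1 B hB) ▸ hB)
  · subst h
    exact ⟨by simp, by simp, by simp⟩

lemma avg_self (w : Game) : avg N w N = w N ∅ := by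
  simp [avg, partitionsOf_empty, pstar]

lemma pot_congr {T : Finset ℕ} {v v' : TUGame} (h : ∀ S ⊆ T, v S = v' S) : pot T v = pot T v' :=
  sum_congr rfl fun S hS => by rw [h S (mem_powerset.1 hS)]

lemma MPW_eq_pot_sub (hw : IsTUX w) {i : ℕ} (hi : i ∈ N) :
    MPW N w i = pot N (avg N w) - pot (N.erase i) (avg N w) :=
  shapley_eq_pot_sub (avg_empty hw) hi

lemma MPW_restrict1_eq_pot_sub (hw : IsTUX w) {i j : ℕ} (hj : j ∈ N) (hi : i ∈ N.erase j) :
    MPW (N.erase j) (restrict1 N w j) i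
      = pot (N.erase j) (avg N w) - pot ((N.erase j).erase i) (avg N w) := by
  have hpot : ∀ T ⊆ N.erase j, pot T (avg (N.erase j) (restrict1 N w j)) = pot T (avg N w) :=
    fun T hT => pot_congr fun S hS => avg_restrict1 w hj (hS.trans hT)
  rw [MPW_eq_pot_sub (hw.restrict1 j) hi, hpot _ subset_rfl, hpot _ (erase_subset _ _)]

lemma MPWsol_efficientX : EfficientX MPWsol := fun N w hw => by
  rw [← avg_self w]
  exact sum_shapley (avg_empty hw)

lemma MPWsol_balancedContributionsX : BalancedContributionsX MPWsol := by
  intro N w hw i hi j hj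
  rcases eq_or_ne i j with rfl | hij
  · rfl
  change MPW N w i - MPW (N.erase j) (restrict1 N w j) i
    = MPW N w j - MPW (N.erase i) (restrict1 N w i) j
  rw [MPW_eq_pot_sub hw hi, MPW_eq_pot_sub hw hj,
    MPW_restrict1_eq_pot_sub hw hj (mem_erase.2 ⟨hij, hi⟩),
    MPW_restrict1_eq_pot_sub hw hi (mem_erase.2 ⟨hij.symm, hj⟩), erase_right_comm]
  ring

end MPW

lemma eq_of_efficientX_of_balancedContributionsX {φ ψ : Sol} (hφe : EfficientX φ)
    (hφb : BalancedContributionsX φ) (hψe : EfficientX ψ) (hψb : BalancedContributionsX ψ)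
    (N : Finset ℕ) (w : Game) (hw : IsTUX w) {i : ℕ} (hi : i ∈ N) : φ N w i = ψ N w i := by
  induction N using Finset.strongInduction generalizing w i with
  | H N ih =>
    have hconst : ∀ j ∈ N, φ N w j - ψ N w j = φ N w i - ψ N w i := by
      intro j hj
      rcases eq_or_ne i j with rfl | hij
      · rfl
      have hφ := hφb N w hw i hi j hj
      have hψ := hψb N w hw i hi j hj
      rw [ih _ (erase_ssubset hj) _ (hw.restrict1 j) (mem_erase.2 ⟨hij, hi⟩),
        ih _ (erase_ssubset hi) _ (hw.restrict1 i) (mem_erase.2 ⟨hij.symm, hj⟩)] at hφ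
      linarith
    have hsum : (N.card : ℝ) * (φ N w i - ψ N w i) = 0 := by
      rw [← nsmul_eq_mul, ← sum_const, ← sum_congr rfl hconst, sum_sub_distrib, hφe N w hw,
        hψe N w hw, sub_self]
    have hN : (N.card : ℝ) ≠ 0 := Nat.cast_ne_zero.2 (card_ne_zero_of_mem hi)
    exact sub_eq_zero.1 ((mul_eq_zero.1 hsum).resolve_left hN)

end TUX

open TUX in
/-- The MPW solution is the unique solution for TUX games
satisfying efficiency and balanced contributions. -/
theorem MPW_unique_EF_BC :
    (EfficientX MPWsol ∧ BalancedContributionsX MPWsol) ∧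
      ∀ φ : Sol, EfficientX φ → BalancedContributionsX φ →
        ∀ (N : Finset ℕ) (w : Game), IsTUX w → ∀ i ∈ N, φ N w i = MPWsol N w i :=
  ⟨⟨MPWsol_efficientX, MPWsol_balancedContributionsX⟩, fun _ hφe hφb N w hw _ hi =>
    eq_of_efficientX_of_balancedContributionsX hφe hφb MPWsol_efficientX
      MPWsol_balancedContributionsX N w hw hi⟩
end

section
/- If a solution φ for TUX games satisfies efficiency and balanced contributions (with respect to the restriction operator r*), then for every TUX game w on N and i ∈ N, n·φ_i(w) = ∑_{j∈N} ( φ_i(w_{−j}) − φ_j(w_{−i}) ) + w(N,∅); consequently φ is uniquely determined by its values on games with fewer players. -/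
open Finset BigOperators

open TUX in
/-- Efficiency and balanced contributions determine each payoff by
`n·φᵢ(w) = ∑_j (φᵢ(w₋ⱼ) − φⱼ(w₋ᵢ)) + w(N,∅)`; consequently two such solutions
agreeing on games with fewer players agree. -/
theorem EF_BC_recursion :
    (∀ φ : Sol, EfficientX φ → BalancedContributionsX φ →
      ∀ (N : Finset ℕ) (w : Game), IsTUX w → ∀ i ∈ N,
        (N.card : ℝ) * φ N w i
          = ∑ j ∈ N, (φ (N.erase j) (restrict1 N w j) i - φ (N.erase i) (restrict1 N w i) j)
            + w N ∅) ∧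
      ∀ φ ψ : Sol, EfficientX φ → BalancedContributionsX φ →
        EfficientX ψ → BalancedContributionsX ψ →
        ∀ (N : Finset ℕ) (w : Game), IsTUX w →
          (∀ (M : Finset ℕ), M.card < N.card → ∀ w' : Game, IsTUX w' →
            ∀ k ∈ M, φ M w' k = ψ M w' k) →
          ∀ i ∈ N, φ N w i = ψ N w i := by
  have hres : ∀ (N : Finset ℕ) (w : Game) (j : ℕ), IsTUX w → IsTUX (restrict1 N w j) := by
    intro N w j hw π
    unfold IsTUX at hw
    simp [restrict1, hw]
  have key : ∀ φ : Sol, EfficientX φ → BalancedContributionsX φ →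
      ∀ (N : Finset ℕ) (w : Game), IsTUX w → ∀ i ∈ N,
        (N.card : ℝ) * φ N w i
          = ∑ j ∈ N, (φ (N.erase j) (restrict1 N w j) i - φ (N.erase i) (restrict1 N w i) j)
            + w N ∅ := by
    intro φ heff hbc N w hw i hi
    have h1 : ∑ j ∈ N, (φ N w i - φ (N.erase j) (restrict1 N w j) i)
        = ∑ j ∈ N, (φ N w j - φ (N.erase i) (restrict1 N w i) j) :=
      Finset.sum_congr rfl fun j hj => hbc N w hw i hi j hj
    rw [Finset.sum_sub_distrib, Finset.sum_sub_distrib, Finset.sum_const,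
      heff N w hw] at h1
    rw [Finset.sum_sub_distrib]
    have : (N.card : ℝ) * φ N w i = (N.card : ℕ) • φ N w i := by
      simp [nsmul_eq_mul]
    linarith [h1, this.symm ▸ h1]
  refine ⟨key, ?_⟩
  intro φ ψ heφ hbφ heψ hbψ N w hw hIH i hi
  have hn : (0:ℝ) < (N.card : ℝ) := by
    exact_mod_cast Finset.card_pos.mpr ⟨i, hi⟩
  have h1 := key φ heφ hbφ N w hw i hi
  have h2 := key ψ heψ hbψ N w hw i hi
  have hsum : ∑ j ∈ N, (φ (N.erase j) (restrict1 N w j) i - φ (N.erase i) (restrict1 N w i) j)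
      = ∑ j ∈ N, (ψ (N.erase j) (restrict1 N w j) i - ψ (N.erase i) (restrict1 N w i) j) := by
    refine Finset.sum_congr rfl fun j hj => ?_
    by_cases hji : j = i
    · subst hji; ring
    · have hc : (N.erase j).card < N.card := Finset.card_erase_lt_of_mem hj
      have hc' : (N.erase i).card < N.card := Finset.card_erase_lt_of_mem hi
      rw [hIH (N.erase j) hc (restrict1 N w j) (hres N w j hw) i
            (Finset.mem_erase.mpr ⟨fun h => hji h.symm, hi⟩),
          hIH (N.erase i) hc' (restrict1 N w i) (hres N w i hw) j
            (Finset.mem_erase.mpr ⟨hji, hj⟩)]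
  have : (N.card : ℝ) * φ N w i = (N.card : ℝ) * ψ N w i := by
    rw [h1, h2, hsum]
  exact mul_left_cancel₀ (ne_of_gt hn) this
end
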